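/- arXiv:math/0411636 — 2 statements merged into one kernel-verified Lean document; each statement's English description precedes it below -/
import Mathlib

section
/- Let F be a locally free sheaf on P^n (n ≥ 2). If for every p with 1 ≤ p ≤ n-1 and every a ∈ ℤ, multiplication by a nonzero linear form h: H^p(F(a-1)) → H^p(F(a)) is injective, then H^p(F(a)) = 0 for all 1 ≤ p ≤ n-1 and all a ∈ ℤ. -/
theorem Int.subsingleton_of_injective_pred {X : ℤ → Type*} (f : ∀ a, X (a - 1) → X a)
    (hf : ∀ a, Function.Injective (f a)) {a₀ : ℤ} (h : ∀ a ≥ a₀, Subsingleton (X a)) (a : ℤ) :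
    Subsingleton (X a) := by
  obtain ha | ha := le_total a₀ a
  · exact h a ha
  · induction a, ha using Int.leInductionDown with
    | base => exact h a₀ le_rfl
    | pred b _ ih => exact (hf b).subsingleton

theorem stmt_4_general (k : Type) [Field k] (n : ℕ)
    (H : ℕ → ℤ → ModuleCat k)                           -- H p a = H^p(Pⁿ, F(a))
    (hmul : ∀ (p : ℕ) (a : ℤ), H p (a - 1) ⟶ H p a)     -- multiplication by h
    (hinj : ∀ (p : ℕ) (a : ℤ), 1 ≤ p → p ≤ n - 1 → Function.Injective ⇑(hmul p a))
    (hserre : ∀ p : ℕ, 1 ≤ p → p ≤ n - 1 → ∃ a₀ : ℤ, ∀ a ≥ a₀, Subsingleton (H p a)) :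
    ∀ (p : ℕ) (a : ℤ), 1 ≤ p → p ≤ n - 1 → Subsingleton (H p a) := by
  intro p a hp1 hp2
  obtain ⟨a₀, hvanish⟩ := hserre p hp1 hp2
  exact Int.subsingleton_of_injective_pred (X := fun a ↦ H p a) (fun a ↦ hmul p a)
    (fun a ↦ hinj p a hp1 hp2) hvanish a

/-- Let `F` be locally free on `Pⁿ` (`n ≥ 2`).  Here `H p a` denotes the
cohomology `H^p(Pⁿ, F(a))` and `hmul p a : H^p(F(a-1)) → H^p(F(a))` is multiplication by a
nonzero linear form `h`.  If these maps are injective for all `1 ≤ p ≤ n-1` and all `a`,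
then (using Serre vanishing `H^p(F(a)) = 0` for `a` large, `1 ≤ p ≤ n-1`, included as a
hypothesis per the context) `H^p(F(a)) = 0` for all `1 ≤ p ≤ n-1` and all `a`. -/
theorem stmt_4 (k : Type) [Field k] (n : ℕ) (hn : 2 ≤ n)
    (H : ℕ → ℤ → ModuleCat k)                           -- H p a = H^p(Pⁿ, F(a))
    (hmul : ∀ (p : ℕ) (a : ℤ), H p (a - 1) ⟶ H p a)     -- multiplication by h
    (hinj : ∀ (p : ℕ) (a : ℤ), 1 ≤ p → p ≤ n - 1 → Function.Injective ⇑(hmul p a))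
    (hserre : ∀ p : ℕ, 1 ≤ p → p ≤ n - 1 → ∃ a₀ : ℤ, ∀ a ≥ a₀, Subsingleton (H p a)) :
    ∀ (p : ℕ) (a : ℤ), 1 ≤ p → p ≤ n - 1 → Subsingleton (H p a) :=
  stmt_4_general k n H hmul hinj hserre
end

section
/- Let F be a locally free sheaf on P^n (n ≥ 2), H a hyperplane, and suppose that for every i ≥ 1 the exact sequence 0 → F_{H_{i-1}}(-1) →(h) F_{H_i} → F_H → 0 splits as O_H-modules. Then for every p ≥ 0, i ≥ 0 and a ∈ ℤ the restriction map H^p(F_{H_i}(a)) → H^p(F_H(a)) is surjective. -/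
open CategoryTheory

lemma CategoryTheory.Functor.map_surjective_of_isSplitEpi {C : Type*} [Category C]
    {R : Type*} [Ring R] (G : C ⥤ ModuleCat R) {X Y : C} (f : X ⟶ Y) [IsSplitEpi f] :
    Function.Surjective (G.map f) :=
  (ModuleCat.epi_iff_surjective _).mp inferInstance

theorem stmt_14_general (k : Type) [Field k]
    (Sheaf : Type)                                   -- coherent sheaves on Pⁿ_k
    (C : Type) [Category C] [Abelian C]              -- coherent O_H-modules
    (restrictHi : Sheaf → ℕ → C)                     -- F_{H_i}
    (twist : C → ℤ → C)                              -- X ↦ X(a)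
    (coh : ℕ → ℤ → C ⥤ ModuleCat k)                  -- X ↦ H^p(H, X(a))
    (F : Sheaf)
    (hmul : ∀ i : ℕ, twist (restrictHi F i) (-1) ⟶ restrictHi F (i + 1))
       -- multiplication by h
    (res : ∀ i : ℕ, restrictHi F i ⟶ restrictHi F 0)   -- restriction F_{H_i} → F_H
    (hres0 : res 0 = 𝟙 (restrictHi F 0))
    (w : ∀ i : ℕ, hmul i ≫ res (i + 1) = 0)
    (hsplit : ∀ i : ℕ, Nonempty (ShortComplex.mk (hmul i) (res (i + 1)) (w i)).Splitting) :
    ∀ (p i : ℕ) (a : ℤ), Function.Surjective ⇑((coh p a).map (res i)) := by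
  intro p i a
  have : IsSplitEpi (res i) := by
    cases i with
    | zero => rw [hres0]; infer_instance
    | succ i => exact (hsplit i).some.isSplitEpi_g
  exact (coh p a).map_surjective_of_isSplitEpi (res i)

/-- `F` is locally free on `Pⁿ` (`n ≥ 2`), `H` a hyperplane with equation
`h`, `H_i` the `i`-th infinitesimal neighbourhood defined by `h^{i+1}` (so `H_0 = H`).
Interface: `C` is the abelian category of coherent `O_H`-modules, `restrictHi F i` is
`F_{H_i}` (an `O_H`-module via the projection from a point), `twist X a = X(a)`, and
`coh p a : C ⥤ ModuleCat k` is the functor `X ↦ H^p(H, X(a))`.  For each `i ≥ 1` the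
exact sequence `0 → F_{H_{i-1}}(-1) →(h) F_{H_i} → F_H → 0` of `O_H`-modules is given by
`hmul` and `res`, where `res i : F_{H_i} → F_H` for every `i` and `res 0 = 𝟙`.

If each of these exact sequences splits as `O_H`-modules, then for every `p ≥ 0`, `i ≥ 0`
and `a ∈ ℤ` the restriction map `H^p(F_{H_i}(a)) → H^p(F_H(a))` is surjective. -/
theorem stmt_14 (k : Type) [Field k] (n : ℕ) (hn : 2 ≤ n)
    (Sheaf : Type)                                   -- coherent sheaves on Pⁿ_k
    (LocallyFree : Sheaf → Prop)
    (C : Type) [Category C] [Abelian C]              -- coherent O_H-modules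
    (restrictHi : Sheaf → ℕ → C)                     -- F_{H_i}
    (twist : C → ℤ → C)                              -- X ↦ X(a)
    (coh : ℕ → ℤ → C ⥤ ModuleCat k)                  -- X ↦ H^p(H, X(a))
    (F : Sheaf) (hF : LocallyFree F)
    (hmul : ∀ i : ℕ, twist (restrictHi F i) (-1) ⟶ restrictHi F (i + 1))
       -- multiplication by h
    (res : ∀ i : ℕ, restrictHi F i ⟶ restrictHi F 0)   -- restriction F_{H_i} → F_H
    (hres0 : res 0 = 𝟙 (restrictHi F 0))
    (w : ∀ i : ℕ, hmul i ≫ res (i + 1) = 0)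
    (hexact : ∀ i : ℕ, (ShortComplex.mk (hmul i) (res (i + 1)) (w i)).ShortExact)
    (hsplit : ∀ i : ℕ, Nonempty (ShortComplex.mk (hmul i) (res (i + 1)) (w i)).Splitting) :
    ∀ (p i : ℕ) (a : ℤ), Function.Surjective ⇑((coh p a).map (res i)) :=
  stmt_14_general k Sheaf C restrictHi twist coh F hmul res hres0 w hsplit
end
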